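/- For every tree T ∈ Tour(k_1,...,k_n) and every label r that is a winner of the lazy tournament of T, the label r loses at most one round of the tournament; in fact r never loses any round (winners and losers are disjoint: each label in {c,1,...,n} is either a winner of every round it plays or a loser of every round it plays). -/

import Mathlib

open SimpleGraph

/-- A candidate leaf-labeled graph on vertex set `Fin V` with `L` labeled leaves. -/
structure PreTree (L V : ℕ) where
  adj : Fin V → Fin V → Bool
  symm' : ∀ u v, adj u v = adj v u
  loopless' : ∀ v, adj v v = false
  leaf : Fin L → Fin V

def PreTree.G {L V : ℕ} (T : PreTree L V) : SimpleGraph (Fin V) where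
  Adj u v := T.adj u v = true
  symm := ⟨fun u v h => by show T.adj v u = true; rw [T.symm']; exact h⟩
  loopless := ⟨fun v h => by change T.adj v v = true at h; rw [T.loopless' v] at h; exact Bool.noConfusion h⟩

instance {L V : ℕ} (T : PreTree L V) : DecidableRel T.G.Adj :=
  fun u v => inferInstanceAs (Decidable (T.adj u v = true))

/-- `T` is a trivalent tree with leaves labeled bijectively by `Fin L`. -/
def PreTree.IsTrivalent {L V : ℕ} (T : PreTree L V) : Prop :=
  T.G.IsTree ∧ (∀ v, T.G.degree v = 1 ∨ T.G.degree v = 3) ∧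
    Function.Injective T.leaf ∧ (∀ i, T.G.degree (T.leaf i) = 1) ∧
    (∀ v, T.G.degree v = 1 → ∃ i, T.leaf i = v)

/-- Label-preserving isomorphism of leaf-labeled graphs. -/
def PreTree.Iso {L V : ℕ} (T T' : PreTree L V) : Prop :=
  ∃ σ : Fin V ≃ Fin V, (∀ u v, T'.adj (σ u) (σ v) = T.adj u v) ∧ ∀ i, σ (T.leaf i) = T'.leaf i

/-- Leaves `a = 0` and `b = 1` share a common (internal) vertex. -/
def PreTree.ABAdj {n V : ℕ} (T : PreTree (n+3) V) : Prop :=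
  ∃ v, T.G.Adj (T.leaf 0) v ∧ T.G.Adj (T.leaf 1) v

/-- Number of isomorphism classes of leaf-labeled graphs satisfying `P`. -/
noncomputable def classCount {L V : ℕ} (P : PreTree L V → Prop) : ℕ :=
  Nat.card (Quot fun (T T' : {T : PreTree L V // P T}) => PreTree.Iso T.1 T'.1)

/-- `w` separates `x` from `y` in `G`: every walk from `x` to `y` passes through `w`. -/
def Separates {V : Type*} (G : SimpleGraph V) (w x y : V) : Prop :=
  ∀ p : G.Walk x y, w ∈ p.support

/-- The laziness rule applies: the unlabeled edge `E` is adjacent to a labeled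
edge carrying a label `u ≠ j` with `u > i`. -/
def LazyApplies {n : ℕ} (T : PreTree (n+3) (2*n+4))
    (lab : Sym2 (Fin (2*n+4)) → Option (Fin (n+3)))
    (E : Sym2 (Fin (2*n+4))) (i j : Fin (n+3)) : Prop :=
  ∃ (e : Sym2 (Fin (2*n+4))) (u : Fin (n+3)) (v : Fin (2*n+4)),
    e ∈ T.G.edgeSet ∧ v ∈ e ∧ v ∈ E ∧ e ≠ E ∧ lab e = some u ∧ u ≠ j ∧ i < u

/-- A run of the lazy tournament on a tree with `n+3` leaves (labels ordered
`a = 0 < b = 1 < c = 2 < 1 = 3 < ⋯ < n = n+2` as elements of `Fin (n+3)`).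
`lab t` is the edge labeling before round `t`; round `t` has `loser t < winner t`
on adjacent labeled edges `loserE t`, `winnerE t` sharing vertex `vtx t` with the
unlabeled edge `newE t`, the pair having the maximal smaller label, and `newE t`
gets labeled according to the laziness rule. -/
structure Run (n : ℕ) (T : PreTree (n+3) (2*n+4)) where
  lab : ℕ → Sym2 (Fin (2*n+4)) → Option (Fin (n+3))
  loser : Fin n → Fin (n+3)
  winner : Fin n → Fin (n+3)
  loserE : Fin n → Sym2 (Fin (2*n+4))
  winnerE : Fin n → Sym2 (Fin (2*n+4))
  newE : Fin n → Sym2 (Fin (2*n+4))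
  vtx : Fin n → Fin (2*n+4)
  init_leaf : ∀ (i : Fin (n+3)) (w : Fin (2*n+4)), T.G.Adj (T.leaf i) w →
    lab 0 s(T.leaf i, w) = some i
  init_other : ∀ e : Sym2 (Fin (2*n+4)), (∀ i : Fin (n+3), T.leaf i ∉ e) → lab 0 e = none
  init_nonedge : ∀ e, e ∉ T.G.edgeSet → lab 0 e = none
  lt_lw : ∀ t, loser t < winner t
  loserE_mem : ∀ t, loserE t ∈ T.G.edgeSet
  winnerE_mem : ∀ t, winnerE t ∈ T.G.edgeSet
  newE_mem : ∀ t, newE t ∈ T.G.edgeSet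
  lab_loserE : ∀ t, lab t.1 (loserE t) = some (loser t)
  lab_winnerE : ∀ t, lab t.1 (winnerE t) = some (winner t)
  vtx_mem : ∀ t, vtx t ∈ loserE t ∧ vtx t ∈ winnerE t ∧ vtx t ∈ newE t
  edges_distinct : ∀ t, loserE t ≠ winnerE t ∧ loserE t ≠ newE t ∧ winnerE t ≠ newE t
  newE_unlabeled : ∀ t, lab t.1 (newE t) = none
  max_rule : ∀ (t : Fin n) (e1 e2 e3 : Sym2 (Fin (2*n+4))) (i j : Fin (n+3)) (v : Fin (2*n+4)),
    e1 ∈ T.G.edgeSet → e2 ∈ T.G.edgeSet → e3 ∈ T.G.edgeSet →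
    lab t.1 e1 = some i → lab t.1 e2 = some j → lab t.1 e3 = none → i < j →
    v ∈ e1 → v ∈ e2 → v ∈ e3 → e1 ≠ e2 → e1 ≠ e3 → e2 ≠ e3 →
    i ≤ loser t
  step_lazy : ∀ t : Fin n, LazyApplies T (lab t.1) (newE t) (loser t) (winner t) →
    lab (t.1+1) (newE t) = some (loser t)
  step_nonlazy : ∀ t : Fin n, ¬ LazyApplies T (lab t.1) (newE t) (loser t) (winner t) →
    lab (t.1+1) (newE t) = some (winner t)
  step_frame : ∀ (t : Fin n) (e : Sym2 (Fin (2*n+4))), e ≠ newE t → lab (t.1+1) e = lab t.1 e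

/-- Number of rounds won by label `i`. -/
def Run.wins {n : ℕ} {T : PreTree (n+3) (2*n+4)} (R : Run n T) (i : Fin (n+3)) : ℕ :=
  (Finset.univ.filter fun t : Fin n => R.winner t = i).card

/-- The element of `Fin (n+3)` corresponding to the numeric label `m+1 ∈ {1,…,n}`. -/
def lbl {n : ℕ} (m : Fin n) : Fin (n+3) := ⟨(m:ℕ)+3, by omega⟩

/-- `T ∈ Tour(k₁,…,kₙ)`. -/
def InTour {n : ℕ} (k : Fin n → ℕ) (T : PreTree (n+3) (2*n+4)) : Prop :=
  T.IsTrivalent ∧ T.ABAdj ∧ ∃ R : Run n T, ∀ m : Fin n, R.wins (lbl m) = k m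

/-- `|Tour(k₁,…,kₙ)|` (isomorphism classes). -/
noncomputable def TourCount {n : ℕ} (k : Fin n → ℕ) : ℕ := classCount (InTour k)

/-- `T'` is obtained from `T` by deleting the largest leaf and suppressing
the resulting degree-2 vertex `w`. -/
def DelLast (n : ℕ) (T : PreTree ((n+1)+3) (2*(n+1)+4)) (T' : PreTree (n+3) (2*n+4)) : Prop :=
  ∃ (g : Fin (2*n+4) → Fin (2*(n+1)+4)) (w : Fin (2*(n+1)+4)),
    Function.Injective g ∧
    T.G.Adj (T.leaf (Fin.last (n+3))) w ∧
    (∀ v, v ∈ Set.range g ↔ (v ≠ T.leaf (Fin.last (n+3)) ∧ v ≠ w)) ∧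
    (∀ u u' : Fin (2*n+4), T'.G.Adj u u' ↔
      (T.G.Adj (g u) (g u') ∨ (T.G.Adj (g u) w ∧ T.G.Adj (g u') w ∧ g u ≠ g u'))) ∧
    (∀ i : Fin (n+3), g (T'.leaf i) = T.leaf (Fin.castSucc i))

/-- `T'` is obtained from `T` by successively deleting the leaves `r+1, …, n`. -/
inductive Restricts : (n : ℕ) → (r : ℕ) → PreTree (n+3) (2*n+4) → PreTree (r+3) (2*r+4) → Prop
  | refl (n : ℕ) (T : PreTree (n+3) (2*n+4)) : Restricts n n T T
  | step (n r : ℕ) (T : PreTree ((n+1)+3) (2*(n+1)+4)) (T1 : PreTree (n+3) (2*n+4))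
      (T2 : PreTree (r+3) (2*r+4)) :
      DelLast n T T1 → Restricts n r T1 T2 → Restricts (n+1) r T T2

/-- The composition `k̃_j`: decrement `k j` and delete position `dpos`
(the rightmost zero of the result). -/
def tilde {n : ℕ} (k : Fin (n+1) → ℕ) (dpos : ℕ) (j : Fin (n+1)) : Fin n → ℕ :=
  fun m => if (m:ℕ) < dpos then Function.update k j (k j - 1) (Fin.castSucc m)
           else Function.update k j (k j - 1) (Fin.succ m)

/-- The map `π_lazy` relates `T` to the pair `(j, T')` where `j` is the winner of the
first round of the tournament, the two leaves that competed are deleted (the shared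
vertex becoming a new leaf) and the labels are shifted according to the (non)lazy case. -/
def PiLazyRel (n : ℕ) (k : Fin (n+1) → ℕ) (T : PreTree ((n+1)+3) (2*(n+1)+4))
    (j : Fin (n+1)) (T' : PreTree (n+3) (2*n+4)) : Prop :=
  ∃ (R : Run (n+1) T) (g : Fin (2*n+4) → Fin (2*(n+1)+4)),
    (∀ m : Fin (n+1), R.wins (lbl m) = k m) ∧
    R.winner ⟨0, Nat.succ_pos n⟩ = lbl j ∧
    Function.Injective g ∧
    (∀ v, v ∈ Set.range g ↔
      (v ≠ T.leaf (R.loser ⟨0, Nat.succ_pos n⟩) ∧ v ≠ T.leaf (R.winner ⟨0, Nat.succ_pos n⟩))) ∧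
    (∀ u u' : Fin (2*n+4), T'.G.Adj u u' ↔ T.G.Adj (g u) (g u')) ∧
    (if k j = 1 then
      ∀ β : Fin (n+3), g (T'.leaf β) =
        (if (β:ℕ) = ((R.loser ⟨0, Nat.succ_pos n⟩) : ℕ) then R.vtx ⟨0, Nat.succ_pos n⟩
         else if (β:ℕ) < ((R.winner ⟨0, Nat.succ_pos n⟩) : ℕ) then T.leaf (Fin.castSucc β)
         else T.leaf (Fin.succ β))
     else
      ∀ β : Fin (n+3), g (T'.leaf β) =
        (if (β:ℕ) < ((R.loser ⟨0, Nat.succ_pos n⟩) : ℕ) then T.leaf (Fin.castSucc β)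
         else if (β:ℕ)+1 = ((R.winner ⟨0, Nat.succ_pos n⟩) : ℕ) then R.vtx ⟨0, Nat.succ_pos n⟩
         else T.leaf (Fin.succ β)))

/-! ### Parking functions.
A parking function of size `n` is encoded by `col : Fin n → Fin n`, where `col x` is the
(0-indexed) column of the label `x+1`; the Dyck path condition (for paths from `(0,n)` to
`(n,0)` staying weakly above the diagonal, cells left of down steps) is `IsPF`. -/

def IsPF {n : ℕ} (col : Fin n → Fin n) : Prop :=
  ∀ j : Fin n, n - (j:ℕ) ≤ (Finset.univ.filter fun x => j ≤ col x).card

/-- Dominance index of label `x+1`: the number of columns strictly to its right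
containing no entry greater than `x+1` (empty columns count). -/
def domIdx {n : ℕ} (col : Fin n → Fin n) (x : Fin n) : ℕ :=
  (Finset.univ.filter fun j : Fin n => col x < j ∧ ∀ y, col y = j → y ≤ x).card

/-- Column-restricted: `x > d_x` for all labels `x` (label `x : Fin n` has value `x+1`). -/
def ColRes {n : ℕ} (col : Fin n → Fin n) : Prop := ∀ x : Fin n, domIdx col x < (x:ℕ) + 1

/-- Number of labels in column `j`. -/
def colCount {n : ℕ} (col : Fin n → Fin n) (j : Fin n) : ℕ :=
  (Finset.univ.filter fun x => col x = j).card

/-- `col'` is the image of `col` under the map `r`: remove the row containing the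
label `1`, decrement the remaining labels, and delete the rightmost empty column `E`. -/
def RSpec {n : ℕ} (col : Fin (n+1) → Fin (n+1)) (col' : Fin n → Fin n) : Prop :=
  ∃ E : Fin (n+1),
    (∀ y : Fin (n+1), y ≠ 0 → col y ≠ E) ∧
    (∀ j : Fin (n+1), (∀ y, y ≠ 0 → col y ≠ j) → j ≤ E) ∧
    (∀ x : Fin n, (col' x : ℕ) =
      if (col (Fin.succ x) : ℕ) < (E:ℕ) then (col (Fin.succ x) : ℕ)
      else (col (Fin.succ x) : ℕ) - 1)

/-- `col` is the parking function `τ(T)`: column `col m` contains label `m+1`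
iff the label `col m + 1` wins round `m+1` of the lazy tournament of `T`. -/
def TauRel {n : ℕ} (T : PreTree (n+3) (2*n+4)) (col : Fin n → Fin n) : Prop :=
  ∃ R : Run n T, ∀ t : Fin n, ((R.winner t) : ℕ) = (col t : ℕ) + 3

/-! Losers decrease from round to round: the pair playing round `t+1` was either already
available in round `t`, so its smaller label is at most the loser of round `t` by the maximality
rule, or it uses the edge labeled in round `t`, and then the laziness rule bounds it. So a label
`r` never wins before its first loss. From then on `r` is *dominated*: at every endpoint of an
edge labeled `r` that still has an unlabeled edge there is an edge with a label above `r`. Right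
after the first loss this holds because the leaf edge of `r` is saturated and the new edge gets
the label `r` only lazily, i.e. next to a larger label. Domination survives every round `r` does
not win, and it prevents `r` from winning, since at the vertex where a round is played the only
labeled edges carry the winner and a smaller label. -/

theorem Sym2.eq_of_ne_of_ne_of_mem {α : Type*} {z : Sym2 α} {a b c : α}
    (ha : a ∈ z) (hb : b ∈ z) (hc : c ∈ z) (hba : b ≠ a) (hca : c ≠ a) : b = c := by
  rw [(Sym2.mem_and_mem_iff hba.symm).1 ⟨ha, hb⟩, Sym2.mem_iff] at hc
  exact (hc.resolve_left hca).symm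

theorem SimpleGraph.eq_or_eq_or_eq_of_degree_eq_three {V : Type*} [DecidableEq V]
    {G : SimpleGraph V} {v : V} [Fintype (G.neighborSet v)] (hv : G.degree v = 3)
    {e₁ e₂ e₃ e : Sym2 V} (h₁ : e₁ ∈ G.incidenceSet v) (h₂ : e₂ ∈ G.incidenceSet v)
    (h₃ : e₃ ∈ G.incidenceSet v) (h₁₂ : e₁ ≠ e₂) (h₁₃ : e₁ ≠ e₃) (h₂₃ : e₂ ≠ e₃)
    (he : e ∈ G.incidenceSet v) : e = e₁ ∨ e = e₂ ∨ e = e₃ := by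
  have hsub : ({e₁, e₂, e₃} : Finset (Sym2 V)) ⊆ G.incidenceFinset v := by
    simp [Finset.insert_subset_iff, h₁, h₂, h₃]
  have hcard : (G.incidenceFinset v).card ≤ ({e₁, e₂, e₃} : Finset (Sym2 V)).card := by
    rw [card_incidenceFinset_eq_degree, hv, Finset.card_eq_three.2 ⟨_, _, _, h₁₂, h₁₃, h₂₃, rfl⟩]
  have hmem := (Finset.eq_of_subset_of_card_le hsub hcard).symm ▸ (G.mem_incidenceFinset v e).2 he
  simpa using hmem

namespace Run

variable {n : ℕ} {T : PreTree (n+3) (2*n+4)} (R : Run n T)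

theorem lab_succ_of_lab_eq_some {t : Fin n} {e : Sym2 (Fin (2*n+4))} {x : Fin (n+3)}
    (h : R.lab t e = some x) : R.lab (t+1) e = some x := by
  have hne : e ≠ R.newE t := by
    rintro rfl
    simp [R.newE_unlabeled] at h
  rw [R.step_frame t e hne, h]

theorem lab_leaf_edge {i : Fin (n+3)} {w : Fin (2*n+4)} (hw : T.G.Adj (T.leaf i) w) :
    ∀ s ≤ n, R.lab s s(T.leaf i, w) = some i
  | 0, _ => R.init_leaf i w hw
  | s+1, hs => R.lab_succ_of_lab_eq_some (t := ⟨s, hs⟩) (lab_leaf_edge hw s (by omega))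

theorem leaf_notMem_of_lab_eq_none {e : Sym2 (Fin (2*n+4))} (he : e ∈ T.G.edgeSet) {s : ℕ}
    (hs : s ≤ n) (h : R.lab s e = none) (i : Fin (n+3)) : T.leaf i ∉ e := by
  intro hi
  have hadj : T.G.Adj (T.leaf i) (Sym2.Mem.other hi) := by
    rwa [← mem_edgeSet, Sym2.other_spec hi]
  have hlab := R.lab_leaf_edge hadj s hs
  rw [Sym2.other_spec hi, h] at hlab
  exact Option.some_ne_none i hlab.symm

theorem degree_eq_three_of_lab_eq_none (hT : T.IsTrivalent) {e : Sym2 (Fin (2*n+4))}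
    (he : e ∈ T.G.edgeSet) {s : ℕ} (hs : s ≤ n) (h : R.lab s e = none) {v : Fin (2*n+4)}
    (hv : v ∈ e) : T.G.degree v = 3 :=
  (hT.2.1 v).resolve_left fun h1 => by
    obtain ⟨i, rfl⟩ := hT.2.2.2.2 v h1
    exact R.leaf_notMem_of_lab_eq_none he hs h i hv

theorem eq_or_eq_or_eq_of_vtx_mem (hT : T.IsTrivalent) (t : Fin n) {e : Sym2 (Fin (2*n+4))}
    (he : e ∈ T.G.edgeSet) (hv : R.vtx t ∈ e) :
    e = R.loserE t ∨ e = R.winnerE t ∨ e = R.newE t :=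
  eq_or_eq_or_eq_of_degree_eq_three
    (R.degree_eq_three_of_lab_eq_none hT (R.newE_mem t) t.2.le (R.newE_unlabeled t)
      (R.vtx_mem t).2.2)
    ⟨R.loserE_mem t, (R.vtx_mem t).1⟩ ⟨R.winnerE_mem t, (R.vtx_mem t).2.1⟩
    ⟨R.newE_mem t, (R.vtx_mem t).2.2⟩ (R.edges_distinct t).1 (R.edges_distinct t).2.1
    (R.edges_distinct t).2.2 ⟨he, hv⟩

theorem lab_succ_newE (t : Fin n) :
    R.lab (t+1) (R.newE t) = some (R.loser t) ∨ R.lab (t+1) (R.newE t) = some (R.winner t) := by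
  by_cases h : LazyApplies T (R.lab t) (R.newE t) (R.loser t) (R.winner t)
  exacts [Or.inl (R.step_lazy t h), Or.inr (R.step_nonlazy t h)]

theorem ne_newE_of_lab_succ_eq_none {t : Fin n} {f : Sym2 (Fin (2*n+4))}
    (hf : R.lab (t+1) f = none) : f ≠ R.newE t := by
  rintro rfl
  rcases R.lab_succ_newE t with h | h <;> simp [h] at hf

theorem lab_succ_ne_none_of_vtx_mem (hT : T.IsTrivalent) (t : Fin n) {f : Sym2 (Fin (2*n+4))}
    (hf : f ∈ T.G.edgeSet) (hv : R.vtx t ∈ f) : R.lab (t+1) f ≠ none := by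
  rcases R.eq_or_eq_or_eq_of_vtx_mem hT t hf hv with rfl | rfl | rfl
  · simp [R.lab_succ_of_lab_eq_some (R.lab_loserE t)]
  · simp [R.lab_succ_of_lab_eq_some (R.lab_winnerE t)]
  · rcases R.lab_succ_newE t with h | h <;> simp [h]

theorem exists_leaf_adj_of_lab_eq_some {r : Fin (n+3)} :
    ∀ s ≤ n, (∀ t : Fin n, t.1 < s → R.loser t ≠ r ∧ R.winner t ≠ r) →
      ∀ {e : Sym2 (Fin (2*n+4))}, R.lab s e = some r →
        ∃ w, T.G.Adj (T.leaf r) w ∧ e = s(T.leaf r, w)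
  | 0, _, _, e, h => by
    by_cases he : e ∈ T.G.edgeSet
    · by_cases hleaf : ∃ i, T.leaf i ∈ e
      · obtain ⟨i, hi⟩ := hleaf
        have hadj : T.G.Adj (T.leaf i) (Sym2.Mem.other hi) := by
          rwa [← mem_edgeSet, Sym2.other_spec hi]
        have hinit := R.init_leaf i _ hadj
        rw [Sym2.other_spec hi, h, Option.some.injEq] at hinit
        subst hinit
        exact ⟨_, hadj, (Sym2.other_spec hi).symm⟩
      · simp [R.init_other e (not_exists.1 hleaf)] at h
    · simp [R.init_nonedge e he] at h
  | s+1, hs, hplay, e, h => by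
    by_cases he : e = R.newE ⟨s, hs⟩
    · subst he
      obtain ⟨hl, hw⟩ := hplay ⟨s, hs⟩ (Nat.lt_succ_self s)
      rcases R.lab_succ_newE ⟨s, hs⟩ with h' | h' <;>
        · rw [h', Option.some.injEq] at h
          contradiction
    · exact exists_leaf_adj_of_lab_eq_some s (by omega)
        (fun t ht => hplay t (by omega)) ((R.step_frame ⟨s, hs⟩ e he).symm.trans h)

theorem le_loser_of_not_lazyApplies {t : Fin n}
    (hlz : ¬ LazyApplies T (R.lab t) (R.newE t) (R.loser t) (R.winner t))
    {e : Sym2 (Fin (2*n+4))} {u : Fin (n+3)} {v : Fin (2*n+4)} (he : e ∈ T.G.edgeSet)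
    (hve : v ∈ e) (hvN : v ∈ R.newE t) (hne : e ≠ R.newE t) (hu : R.lab t e = some u)
    (huw : u ≠ R.winner t) : u ≤ R.loser t :=
  not_lt.1 fun hlt => hlz ⟨e, u, v, he, hve, hvN, hne, hu, huw, hlt⟩

theorem loser_succ_le {t t' : Fin n} (h : t'.1 = t.1 + 1) : R.loser t' ≤ R.loser t := by
  have hL : R.lab (t+1) (R.loserE t') = some (R.loser t') := h ▸ R.lab_loserE t'
  have hW : R.lab (t+1) (R.winnerE t') = some (R.winner t') := h ▸ R.lab_winnerE t'
  have hN : R.lab (t+1) (R.newE t') = none := h ▸ R.newE_unlabeled t'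
  have hlw := R.lt_lw t'
  obtain ⟨hvL, hvW, hvN⟩ := R.vtx_mem t'
  obtain ⟨hLW, hLN, hWN⟩ := R.edges_distinct t'
  by_cases hLn : R.loserE t' = R.newE t
  · have hWn : R.winnerE t' ≠ R.newE t := hLn ▸ hLW.symm
    by_cases hlz : LazyApplies T (R.lab t) (R.newE t) (R.loser t) (R.winner t)
    · rw [hLn, R.step_lazy t hlz, Option.some.injEq] at hL
      exact hL.ge
    · rw [hLn, R.step_nonlazy t hlz, Option.some.injEq] at hL
      exact hlw.le.trans <| R.le_loser_of_not_lazyApplies hlz (R.winnerE_mem t') hvW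
        (hLn ▸ hvL) hWn ((R.step_frame t _ hWn).symm.trans hW) (hL ▸ hlw.ne')
  by_cases hWn : R.winnerE t' = R.newE t
  · by_cases hlz : LazyApplies T (R.lab t) (R.newE t) (R.loser t) (R.winner t)
    · rw [hWn, R.step_lazy t hlz, Option.some.injEq] at hW
      exact hW ▸ hlw.le
    · rw [hWn, R.step_nonlazy t hlz, Option.some.injEq] at hW
      exact R.le_loser_of_not_lazyApplies hlz (R.loserE_mem t') hvL (hWn ▸ hvW) hLn
        ((R.step_frame t _ hLn).symm.trans hL) (hW ▸ hlw.ne)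
  · have hNn : R.newE t' ≠ R.newE t := R.ne_newE_of_lab_succ_eq_none hN
    exact R.max_rule t _ _ _ _ _ _ (R.loserE_mem t') (R.winnerE_mem t') (R.newE_mem t')
      ((R.step_frame t _ hLn).symm.trans hL) ((R.step_frame t _ hWn).symm.trans hW)
      ((R.step_frame t _ hNn).symm.trans hN) hlw hvL hvW hvN hLW hLN hWN

theorem antitone_loser : Antitone R.loser := by
  rcases n with _ | n
  · exact fun t => t.elim0
  · exact Fin.antitone_iff_succ_le.2 fun i => R.loser_succ_le (by simp)

theorem loser_lt_winner_of_le {t t₀ : Fin n} (h : t ≤ t₀) : R.loser t₀ < R.winner t :=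
  (R.antitone_loser h).trans_lt (R.lt_lw t)

def Dominated (r : Fin (n+3)) (s : ℕ) : Prop :=
  ∀ X v f, R.lab s X = some r → v ∈ X → f ∈ T.G.edgeSet → v ∈ f → R.lab s f = none →
    ∃ e u, e ∈ T.G.edgeSet ∧ v ∈ e ∧ R.lab s e = some u ∧ r < u

theorem winner_ne_of_dominated (hT : T.IsTrivalent) {r : Fin (n+3)} {t : Fin n}
    (hd : R.Dominated r t) : R.winner t ≠ r := by
  intro hw
  obtain ⟨e, u, he, hve, hu, hru⟩ := hd (R.winnerE t) (R.vtx t) (R.newE t)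
    (hw ▸ R.lab_winnerE t) (R.vtx_mem t).2.1 (R.newE_mem t) (R.vtx_mem t).2.2
    (R.newE_unlabeled t)
  rcases R.eq_or_eq_or_eq_of_vtx_mem hT t he hve with rfl | rfl | rfl
  · rw [R.lab_loserE, Option.some.injEq] at hu
    exact (hu ▸ hru).not_gt (hw ▸ R.lt_lw t)
  · rw [R.lab_winnerE, Option.some.injEq, hw] at hu
    exact hru.ne hu
  · simp [R.newE_unlabeled] at hu

theorem exists_lab_gt_of_lab_succ_newE (hT : T.IsTrivalent) {t : Fin n} {r : Fin (n+3)}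
    (hwr : R.winner t ≠ r) (hX : R.lab (t+1) (R.newE t) = some r) {v : Fin (2*n+4)}
    {f : Sym2 (Fin (2*n+4))} (hv : v ∈ R.newE t) (hf : f ∈ T.G.edgeSet) (hvf : v ∈ f)
    (hfn : R.lab (t+1) f = none) :
    ∃ e u, e ∈ T.G.edgeSet ∧ v ∈ e ∧ R.lab (t+1) e = some u ∧ r < u := by
  have hlz : LazyApplies T (R.lab t) (R.newE t) (R.loser t) (R.winner t) := by
    by_contra hlz
    exact hwr (Option.some.inj ((R.step_nonlazy t hlz).symm.trans hX))
  have hr : R.loser t = r := Option.some.inj ((R.step_lazy t hlz).symm.trans hX)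
  obtain ⟨e, u, v₀, he, hv₀e, hv₀N, hne, hu, huw, hlt⟩ := hlz
  have hvt : v ≠ R.vtx t := fun h => R.lab_succ_ne_none_of_vtx_mem hT t hf (h ▸ hvf) hfn
  have hv₀t : v₀ ≠ R.vtx t := by
    rintro rfl
    rcases R.eq_or_eq_or_eq_of_vtx_mem hT t he hv₀e with rfl | rfl | rfl
    · rw [R.lab_loserE, Option.some.injEq] at hu
      exact hlt.ne hu
    · rw [R.lab_winnerE, Option.some.injEq] at hu
      exact huw hu.symm
    · exact hne rfl
  obtain rfl := Sym2.eq_of_ne_of_ne_of_mem (R.vtx_mem t).2.2 hv₀N hv hv₀t hvt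
  exact ⟨e, u, he, hv₀e, R.lab_succ_of_lab_eq_some hu, hr ▸ hlt⟩

theorem dominated_succ (hT : T.IsTrivalent) {t : Fin n} {r : Fin (n+3)}
    (hd : R.Dominated r t) (hwr : R.winner t ≠ r) : R.Dominated r (t+1) := by
  intro X v f hX hv hf hvf hfn
  by_cases hXN : X = R.newE t
  · subst hXN
    exact R.exists_lab_gt_of_lab_succ_newE hT hwr hX hv hf hvf hfn
  obtain ⟨e, u, he, hve, hu, hru⟩ := hd X v f ((R.step_frame t X hXN).symm.trans hX) hv hf hvf
    ((R.step_frame t f (R.ne_newE_of_lab_succ_eq_none hfn)).symm.trans hfn)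
  exact ⟨e, u, he, hve, R.lab_succ_of_lab_eq_some hu, hru⟩

theorem dominated_succ_of_first_loss (hT : T.IsTrivalent) {t : Fin n} {r : Fin (n+3)}
    (hl : R.loser t = r) (hfirst : ∀ s < t, R.loser s ≠ r) : R.Dominated r (t+1) := by
  intro X v f hX hv hf hvf hfn
  have hwr : R.winner t ≠ r := hl ▸ (R.lt_lw t).ne'
  by_cases hXN : X = R.newE t
  · subst hXN
    exact R.exists_lab_gt_of_lab_succ_newE hT hwr hX hv hf hvf hfn
  -- `X` and `loserE t` are both the leaf edge of `r`, whose inner end `vtx t` is saturated.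
  exfalso
  have hunplayed : ∀ s : Fin n, s.1 < t.1 → R.loser s ≠ r ∧ R.winner s ≠ r :=
    fun s hs => ⟨hfirst s hs, (hl ▸ R.loser_lt_winner_of_le hs.le).ne'⟩
  obtain ⟨w, hw, rfl⟩ := R.exists_leaf_adj_of_lab_eq_some t t.2.le hunplayed
    ((R.step_frame t X hXN).symm.trans hX)
  obtain ⟨w', hw', hL⟩ := R.exists_leaf_adj_of_lab_eq_some t t.2.le hunplayed
    (hl ▸ R.lab_loserE t)
  have hww : w' = w := (degree_eq_one_iff_existsUnique_adj.1 (hT.2.2.2.1 r)).unique hw' hw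
  have hvleaf : v ≠ T.leaf r := fun h => R.leaf_notMem_of_lab_eq_none hf t.2 hfn r (h ▸ hvf)
  have hvtleaf : R.vtx t ≠ T.leaf r := fun h =>
    R.leaf_notMem_of_lab_eq_none (R.newE_mem t) t.2.le (R.newE_unlabeled t) r
      (h ▸ (R.vtx_mem t).2.2)
  have hvt : v = R.vtx t := Sym2.eq_of_ne_of_ne_of_mem (Sym2.mem_mk_left _ _) hv
    (hww ▸ hL ▸ (R.vtx_mem t).1) hvleaf hvtleaf
  exact R.lab_succ_ne_none_of_vtx_mem hT t hf (hvt ▸ hvf) hfn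

theorem winner_ne_of_loser_eq (hT : T.IsTrivalent) {r : Fin (n+3)} {t₀ : Fin n}
    (hl : R.loser t₀ = r) (t : Fin n) : R.winner t ≠ r := by
  obtain ⟨t₀, hl, hfirst⟩ : ∃ t₀, R.loser t₀ = r ∧ ∀ s < t₀, R.loser s ≠ r := by
    obtain ⟨m, hm, hmin⟩ := wellFounded_lt.has_min {s | R.loser s = r} ⟨t₀, hl⟩
    exact ⟨m, hm, fun s hs h => hmin s h hs⟩
  rcases le_or_gt t t₀ with hle | hlt
  · exact (hl ▸ R.loser_lt_winner_of_le hle).ne'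
  have hdom : ∀ s, t₀.1 + 1 ≤ s → s < n → R.Dominated r s := by
    intro s hs
    induction s, hs using Nat.le_induction with
    | base => exact fun _ => R.dominated_succ_of_first_loss hT hl hfirst
    | succ s hs ih =>
      intro hsn
      have hd := ih (by omega)
      exact R.dominated_succ hT (t := ⟨s, by omega⟩) hd (R.winner_ne_of_dominated hT hd)
  exact R.winner_ne_of_dominated hT (hdom t hlt t.2)

end Run

theorem winners_losers_disjoint_general (n : ℕ)
    (T : PreTree (n+3) (2*n+4)) (hT : T.IsTrivalent)
    (R : Run n T) :
    (∀ r : Fin (n+3), (∃ t : Fin n, R.winner t = r) → ∀ t : Fin n, R.loser t ≠ r) ∧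
    (∀ x : Fin (n+3),
      (∀ t : Fin n, (R.loser t = x ∨ R.winner t = x) → R.winner t = x) ∨
      (∀ t : Fin n, (R.loser t = x ∨ R.winner t = x) → R.loser t = x)) := by
  have never_both : ∀ r, (∃ t, R.winner t = r) → ∀ t, R.loser t ≠ r :=
    fun _ ⟨t, hw⟩ _ hl => R.winner_ne_of_loser_eq hT hl t hw
  refine ⟨never_both, fun x => ?_⟩
  by_cases hx : ∃ t, R.winner t = x
  · exact Or.inl fun t ht => ht.resolve_left (never_both x hx t)
  · exact Or.inr fun t ht => ht.resolve_right fun hw => hx ⟨t, hw⟩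

/-- In the lazy tournament of `T ∈ Tour(k)`, winners never lose: a label
that wins some round loses no round; each label is either the winner of every round it plays
or the loser of every round it plays. -/
theorem winners_losers_disjoint (n : ℕ) (k : Fin n → ℕ) (hk : ∑ m, k m = n)
    (T : PreTree (n+3) (2*n+4)) (hT : T.IsTrivalent) (hab : T.ABAdj)
    (R : Run n T) (hR : ∀ m : Fin n, R.wins (lbl m) = k m) :
    (∀ r : Fin (n+3), (∃ t : Fin n, R.winner t = r) → ∀ t : Fin n, R.loser t ≠ r) ∧
    (∀ x : Fin (n+3),
      (∀ t : Fin n, (R.loser t = x ∨ R.winner t = x) → R.winner t = x) ∨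
      (∀ t : Fin n, (R.loser t = x ∨ R.winner t = x) → R.loser t = x)) :=
  winners_losers_disjoint_general n T hT R
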